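/- Let M be a d×d real matrix and n ≥ 1 a natural number such that M^n = 1. If trace(M) = d, then M = 1. -/

import Mathlib

/-!
Over `ℂ` the eigenvalues of `M` are `n`-th roots of unity, so their real parts are at most `1`;
since they sum to `trace M = d`, all of them equal `1`, and Cayley–Hamilton makes `M - 1`
nilpotent. A unipotent `u` with `u ^ n = 1` is trivial: `(∑ i < n, u ^ i) * (u - 1) = 0`, and
`∑ i < n, u ^ i` is `n` plus a nilpotent, hence a unit.
-/

open Polynomial

theorem isNilpotent_pow_sub_one_of_isNilpotent_sub_one {R : Type*} [Ring R] {u : R}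
    (hu : IsNilpotent (u - 1)) (i : ℕ) : IsNilpotent (u ^ i - 1) := by
  rw [← geom_sum_mul]
  refine Commute.isNilpotent_mul_left (Commute.sum_left _ _ _ fun j _ ↦ ?_) hu
  exact ((Commute.refl u).pow_left j).sub_right (Commute.one_right _)

theorem eq_one_of_pow_eq_one_of_isNilpotent_sub_one {R : Type*} [Ring R] {u : R} {n : ℕ}
    (hn : IsUnit (n : R)) (hun : u ^ n = 1) (hu : IsNilpotent (u - 1)) : u = 1 := by
  have hsum : ∑ i ∈ Finset.range n, u ^ i = n + ∑ i ∈ Finset.range n, (u ^ i - 1) := by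
    simp [Finset.sum_sub_distrib]
  have hunit : IsUnit (∑ i ∈ Finset.range n, u ^ i) := by
    rw [hsum]
    refine IsNilpotent.isUnit_add_left_of_commute ?_ hn (Nat.cast_commute n _).symm
    refine Commute.isNilpotent_sum (fun i _ ↦ isNilpotent_pow_sub_one_of_isNilpotent_sub_one hu i)
      fun i j _ _ ↦ ?_
    exact (((Commute.refl u).pow_pow i j).sub_right (Commute.one_right _)).sub_left
      (Commute.one_left _)
  rw [← sub_eq_zero, ← hunit.mul_right_eq_zero, geom_sum_mul, hun, sub_self]

open scoped ComplexOrder in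
theorem Complex.eq_one_of_norm_le_one_of_re_eq_one {z : ℂ} (hz : ‖z‖ ≤ 1) (hre : z.re = 1) :
    z = 1 := by
  have h0 : 0 ≤ z := re_eq_norm.mp (le_antisymm (re_le_norm z) (hz.trans hre.ge))
  exact ext hre (nonneg_iff.mp h0).2.symm

theorem Complex.multiset_eq_replicate_one_of_sum_eq_card {s : Multiset ℂ}
    (hs : ∀ z ∈ s, ‖z‖ ≤ 1) (hsum : s.sum = Multiset.card s) :
    s = Multiset.replicate (Multiset.card s) 1 := by
  have hre_le : ∀ z ∈ s, z.re ≤ 1 := fun z hz ↦ (re_le_norm z).trans (hs z hz)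
  have hre : ∀ z ∈ s, z.re = 1 := by
    by_contra! ⟨z, hz, hne⟩
    have hlt := Multiset.sum_lt_sum (g := fun _ ↦ (1 : ℝ)) hre_le
      ⟨z, hz, (hre_le z hz).lt_of_ne hne⟩
    have hsum_re : (s.map re).sum = Multiset.card s := by
      simpa [hsum] using (map_multiset_sum reAddGroupHom s).symm
    simp [hsum_re] at hlt
  exact Multiset.eq_replicate.mpr
    ⟨rfl, fun z hz ↦ eq_one_of_norm_le_one_of_re_eq_one (hs z hz) (hre z hz)⟩

namespace Matrix

variable {ι : Type*} [Fintype ι] [DecidableEq ι]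

theorem isNilpotent_sub_one_of_charpoly_eq_X_sub_one_pow {R : Type*} [CommRing R]
    {A : Matrix ι ι R} {k : ℕ} (h : A.charpoly = (X - 1) ^ k) : IsNilpotent (A - 1) :=
  ⟨k, by simpa [h] using A.aeval_self_charpoly⟩

theorem pow_eq_one_of_mem_roots_charpoly {K : Type*} [Field K] {A : Matrix ι ι K} {n : ℕ}
    (hA : A ^ n = 1) {μ : K} (hμ : μ ∈ A.charpoly.roots) : μ ^ n = 1 := by
  have hpow := spectrum.pow_image_subset A n
    ⟨μ, mem_spectrum_iff_isRoot_charpoly.mpr (isRoot_of_mem_roots hμ), rfl⟩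
  rw [hA, spectrum.mem_iff, ← map_one (algebraMap K _), ← map_sub] at hpow
  by_contra hne
  exact hpow ((sub_ne_zero.mpr hne).isUnit.map _)

theorem charpoly_eq_X_sub_one_pow_of_pow_eq_one_of_trace_eq_card {A : Matrix ι ι ℂ} {n : ℕ}
    (hn : n ≠ 0) (hA : A ^ n = 1) (htr : A.trace = Fintype.card ι) :
    A.charpoly = (X - 1) ^ Fintype.card ι := by
  have hsplit := IsAlgClosed.splits A.charpoly
  have hcard : Multiset.card A.charpoly.roots = Fintype.card ι := by
    rw [splits_iff_card_roots.mp hsplit, charpoly_natDegree_eq_dim]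
  have hroots : A.charpoly.roots = Multiset.replicate (Fintype.card ι) 1 := hcard ▸
    Complex.multiset_eq_replicate_one_of_sum_eq_card
      (fun μ hμ ↦
        (Complex.norm_eq_one_of_pow_eq_one (pow_eq_one_of_mem_roots_charpoly hA hμ) hn).le)
      (by rw [← trace_eq_sum_roots_charpoly, htr, hcard])
  rw [hsplit.eq_prod_roots_of_monic A.charpoly_monic, hroots, Multiset.map_replicate,
    Multiset.prod_replicate, C_1]

end Matrix

/-- If `M` is a real `d × d` matrix with `M ^ n = 1` for some `n ≥ 1`,
and `trace M = d`, then `M = 1`. -/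
theorem eq_one_of_trace_eq_dim {d : ℕ} (M : Matrix (Fin d) (Fin d) ℝ)
    (n : ℕ) (hn : 1 ≤ n) (h : M ^ n = 1) (htr : Matrix.trace M = (d : ℝ)) :
    M = 1 := by
  let N := (algebraMap ℝ ℂ).mapMatrix M
  have hN : N ^ n = 1 := by rw [← map_pow, h, map_one]
  have htrN : N.trace = d := by
    rw [← map_natCast (algebraMap ℝ ℂ), ← htr]
    exact (AddMonoidHom.map_trace (algebraMap ℝ ℂ) M).symm
  have hnN : IsUnit (n : Matrix (Fin d) (Fin d) ℂ) := by
    simpa using (Nat.cast_ne_zero.mpr (Nat.one_le_iff_ne_zero.mp hn) : (n : ℂ) ≠ 0).isUnit.map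
      (algebraMap ℂ (Matrix (Fin d) (Fin d) ℂ))
  have hN1 : N = 1 := eq_one_of_pow_eq_one_of_isNilpotent_sub_one hnN hN <|
    Matrix.isNilpotent_sub_one_of_charpoly_eq_X_sub_one_pow <|
      Matrix.charpoly_eq_X_sub_one_pow_of_pow_eq_one_of_trace_eq_card (by omega) hN
        (by simpa using htrN)
  exact Matrix.map_injective (algebraMap ℝ ℂ).injective
    (hN1.trans (map_one (algebraMap ℝ ℂ).mapMatrix).symm)
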